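/- For an interdependent n-person game under the learning dynamics, for every all-discontent state d ∈ D and every z^0 ∈ C^0, the resistance between the recurrence class D and the singleton recurrence class {z^0} satisfies r_{d z^0} = Σ_{i∈N} (1 − ū_i(z^0)). -/

import Mathlib

open scoped Classical
open Filter Topology

namespace Paper

/-- Mood of an agent: content or discontent. -/
inductive Mood where
  | content : Mood
  | discontent : Mood
deriving DecidableEq

/-- The internal state of a single agent: a baseline action, a baseline utility and a mood. -/
structure AgentState (α : Type*) where
  act : α
  util : ℝ
  mood : Mood

variable {n : ℕ} {A : Fin n → Type*} {W : Type*}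

/-- Joint state of all agents. -/
abbrev JState (A : Fin n → Type*) := ∀ i, AgentState (A i)

/-- The baseline (joint) action profile of a joint state. -/
def prof (z : JState A) : ∀ j, A j := fun j => (z j).act

def allContent (z : JState A) : Prop := ∀ i, (z i).mood = Mood.content

def allDiscontent (z : JState A) : Prop := ∀ i, (z i).mood = Mood.discontent

variable [∀ i, Fintype (A i)] [Fintype W]

/-- The network welfare of an action profile under a disturbance. -/
def welfare (U : ∀ i : Fin n, (∀ j, A j) → W → ℝ) (a : ∀ j, A j) (w : W) : ℝ :=
  ∑ i, U i a w

/-- ρ : the smallest real `r` such that `|U i a w₁ − U i a w₂| ≤ r` for all `i`, `a`, `w₁`, `w₂`. -/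
noncomputable def rho (U : ∀ i : Fin n, (∀ j, A j) → W → ℝ) : ℝ :=
  sInf {r : ℝ | ∀ (i : Fin n) (a : ∀ j, A j) (w₁ w₂ : W), |U i a w₁ - U i a w₂| ≤ r}

/-- Interdependence of the n-person game subject to disturbances. -/
def Interdependent (U : ∀ i : Fin n, (∀ j, A j) → W → ℝ) : Prop :=
  ∀ (a : ∀ j, A j) (w : W) (J : Set (Fin n)), J.Nonempty → J ≠ Set.univ →
    ∃ i ∉ J, ∃ a' : ∀ j, A j, (∀ j ∉ J, a' j = a j) ∧
      ∃ w' : W, |U i a' w' - U i a w| > rho U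

/-- Probability that agent `i` in state `zi` plays action `ai`, with experimentation
rate `ε` and constant `c`: a content agent plays its baseline action with probability
`1 − ε^c` and each other action with probability `ε^c/(|A i| − 1)`; a discontent agent
plays each action with probability `1/|A i|`. -/
noncomputable def actProb (c ε : ℝ) {i : Fin n} (zi : AgentState (A i)) (ai : A i) : ℝ :=
  match zi.mood with
  | Mood.content =>
      if ai = zi.act then 1 - ε ^ c else ε ^ c / ((Fintype.card (A i) : ℝ) - 1)
  | Mood.discontent => 1 / (Fintype.card (A i) : ℝ)

/-- Probability that agent `i` moves from state `zi` to state `zi'` after playing action `ai`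
and receiving payoff `u`: a content agent that played its baseline action and received a
payoff within `ρ` of its baseline keeps its state; otherwise the state becomes
`[ai, u, content]` with probability `ε^(1−u)` and `[ai, u, discontent]` with
probability `1 − ε^(1−u)`. -/
noncomputable def updProb (ρ ε : ℝ) {i : Fin n} (zi zi' : AgentState (A i))
    (ai : A i) (u : ℝ) : ℝ :=
  if zi.mood = Mood.content ∧ ai = zi.act ∧ |u - zi.util| ≤ ρ then
    (if zi' = zi then 1 else 0)
  else if zi' = ⟨ai, u, Mood.content⟩ then ε ^ (1 - u)
  else if zi' = ⟨ai, u, Mood.discontent⟩ then 1 - ε ^ (1 - u)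
  else 0

/-- One-step transition probability `P^ε z z'` of the joint learning dynamics, averaging
over the joint action chosen and the i.i.d. disturbance with law `Prw`.
At `ε = 0` this is the unperturbed chain `P^0` (the entrywise limit as `ε → 0`). -/
noncomputable def P (U : ∀ i : Fin n, (∀ j, A j) → W → ℝ) (Prw : W → ℝ) (c : ℝ)
    (ε : ℝ) (z z' : JState A) : ℝ :=
  ∑ a : ∀ j, A j, ∑ w : W,
    (∏ i, actProb c ε (z i) (a i)) * Prw w *
      (∏ i, updProb (rho U) ε (z i) (z' i) (a i) (U i a w))

variable (U : ∀ i : Fin n, (∀ j, A j) → W → ℝ) (Prw : W → ℝ) (c : ℝ)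

/-- One-step transition with positive probability under the perturbed dynamics. -/
def stepPos (x y : JState A) : Prop := ∃ ε ∈ Set.Ioo (0:ℝ) 1, 0 < P U Prw c ε x y

/-- A joint state is valid if each baseline utility lies in the range of the
corresponding utility function. -/
def ValidState (z : JState A) : Prop := ∀ i, ∃ (a : ∀ j, A j) (w : W), U i a w = (z i).util

/-- The joint state space `Z`: joint states reachable with positive probability (in some
positive number of steps) from a joint state in which all agents are discontent. -/
def SSpace : Set (JState A) :=
  {z | ∃ z₀ : JState A, ValidState U z₀ ∧ allDiscontent z₀ ∧
        Relation.TransGen (stepPos U Prw c) z₀ z}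

/-- The set `D` of all-discontent joint states in `Z`. -/
def Dset : Set (JState A) := {z | z ∈ SSpace U Prw c ∧ allDiscontent z}

/-- The set `B i`: states whose baseline utility for agent `i` is aligned with the baseline
action profile for some disturbance and within `ρ` of it for every disturbance. -/
def Bset (i : Fin n) : Set (JState A) :=
  {z | z ∈ SSpace U Prw c ∧ (∃ w : W, (z i).util = U i (prof z) w) ∧
       ∀ w' : W, |(z i).util - U i (prof z) w'| ≤ rho U}

/-- The content classes `C^m`. -/
def Cm : ℕ → Set (JState A)
  | 0 => {z | z ∈ SSpace U Prw c ∧ allContent z ∧ ∀ i, z ∈ Bset U Prw c i}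
  | (m+1) => {z | z ∈ SSpace U Prw c ∧ allContent z ∧
      ∃ J : Fin (m+2) → Finset (Fin n),
        (∀ k, (J k).Nonempty) ∧
        (∀ k l, k ≠ l → Disjoint (J k) (J l)) ∧
        (Finset.univ.biUnion J = Finset.univ) ∧
        (∀ j ∈ J (Fin.last (m+1)), z ∈ Bset U Prw c j) ∧
        ∃ z' ∈ Cm m, ∀ j ∉ J (Fin.last (m+1)),
          z j = z' j ∧ ∀ w' : W, |(z' j).util - U j (prof z) w'| ≤ rho U}

/-- One-step transition with positive probability under the unperturbed chain `P^0`. -/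
def step0 (x y : JState A) : Prop := 0 < P U Prw c 0 x y

/-- Reachability (in zero or more steps) under the unperturbed chain `P^0`. -/
def Reach0 : JState A → JState A → Prop := Relation.ReflTransGen (step0 U Prw c)

/-- A state is recurrent for `P^0` if every state reachable from it can reach it back. -/
def Recurrent0 (x : JState A) : Prop := ∀ y, Reach0 U Prw c x y → Reach0 U Prw c y x

/-- Recurrence classes of the unperturbed chain `P^0` on `Z`. -/
def RecClass (Cl : Set (JState A)) : Prop :=
  ∃ x ∈ SSpace U Prw c, Recurrent0 U Prw c x ∧
    Cl = {y | y ∈ SSpace U Prw c ∧ Reach0 U Prw c x y}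

/- Generic Markov chain notions. -/

/-- `k`-step reachability (through positive-probability transitions) for a kernel `Q`. -/
def MReachN {X : Type*} (Q : X → X → ℝ) : ℕ → X → X → Prop
  | 0 => fun x y => x = y
  | (k+1) => fun x y => ∃ z, 0 < Q x z ∧ MReachN Q k z y

/-- Irreducibility of a kernel on a set of states. -/
def MIrreducibleOn {X : Type*} (Q : X → X → ℝ) (S : Set X) : Prop :=
  ∀ x ∈ S, ∀ y ∈ S, ∃ k, 0 < k ∧ MReachN Q k x y

/-- Aperiodicity of a kernel on a set of states: the return times to each state
have greatest common divisor 1. -/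
def MAperiodicOn {X : Type*} (Q : X → X → ℝ) (S : Set X) : Prop :=
  ∀ x ∈ S, ∀ d : ℕ, (∀ k, 0 < k → MReachN Q k x x → d ∣ k) → d = 1

/-- Reachability for a kernel `Q`. -/
def MReach {X : Type*} (Q : X → X → ℝ) : X → X → Prop :=
  Relation.ReflTransGen (fun x y => 0 < Q x y)

/-- Recurrent state of a kernel. -/
def MRecurrent {X : Type*} (Q : X → X → ℝ) (x : X) : Prop :=
  ∀ y, MReach Q x y → MReach Q y x

/-- Recurrence class of a kernel. -/
def MRecClass {X : Type*} (Q : X → X → ℝ) (Cl : Set X) : Prop :=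
  ∃ x, MRecurrent Q x ∧ Cl = {y | MReach Q x y}

/-- Stationary distribution of a kernel on a finite type. -/
def MStationary {X : Type*} [Fintype X] (Q : X → X → ℝ) (μ : X → ℝ) : Prop :=
  (∀ x, 0 ≤ μ x) ∧ (∑ x, μ x) = 1 ∧ ∀ y, (∑ x, μ x * Q x y) = μ y

/-- Stationary distribution of a kernel supported on a set `S`. -/
def IsStationaryOn {X : Type*} (Q : X → X → ℝ) (S : Set X) (μ : X → ℝ) : Prop :=
  (∀ x, 0 ≤ μ x) ∧ (∀ x ∉ S, μ x = 0) ∧ (∑ᶠ x ∈ S, μ x) = 1 ∧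
    ∀ y ∈ S, (∑ᶠ x ∈ S, μ x * Q x y) = μ y

/-- `r` is the resistance of the transition `x → y` for the family of kernels `Pf ε`:
`0 < lim_{ε→0⁺} ε^{−r} Pf ε x y < ∞`. -/
def FamTransRes {X : Type*} (Pf : ℝ → X → X → ℝ) (x y : X) (r : ℝ) : Prop :=
  ∃ L : ℝ, 0 < L ∧
    Tendsto (fun ε : ℝ => Pf ε x y / ε ^ r) (𝓝[>] (0:ℝ)) (𝓝 L)

/-- `PathRes R x y r`: there is a path (of one or more transitions) from `x` to `y`
whose transitions have resistances (in the sense of `R`) summing to `r`. -/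
inductive PathRes {X : Type*} (R : X → X → ℝ → Prop) : X → X → ℝ → Prop
  | single {x y : X} {r : ℝ} : R x y r → PathRes R x y r
  | cons {x y z : X} {r s : ℝ} : R x y r → PathRes R y z s → PathRes R x z (r + s)

/-- `ClassResIs R S T r` : `r` is the minimum path resistance over paths from a state of
`S` to a state of `T`. -/
def ClassResIs {X : Type*} (R : X → X → ℝ → Prop) (S T : Set X) (r : ℝ) : Prop :=
  (∃ x ∈ S, ∃ y ∈ T, PathRes R x y r) ∧
    ∀ x ∈ S, ∀ y ∈ T, ∀ r', PathRes R x y r' → r ≤ r'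

/-- Resistance of a transition for the learning dynamics. -/
def TransRes (x y : JState A) (r : ℝ) : Prop := FamTransRes (P U Prw c) x y r

/- Trees over recurrence classes and stochastic potential. -/

/-- An `ℓ`-tree over the collection `RC` of recurrence classes, rooted at `root`, encoded by a
parent map: every non-root class has exactly one outgoing edge (to its parent), and following
parents from any class leads to the root. -/
def IsLTree {X : Type*} (RC : Set (Set X)) (root : Set X) (par : Set X → Set X) : Prop :=
  root ∈ RC ∧ par root = root ∧ (∀ Cl ∈ RC, par Cl ∈ RC) ∧
    ∀ Cl ∈ RC, ∃ k : ℕ, par^[k] Cl = root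

/-- Total resistance of a tree: sum over non-root classes of the resistance of the
edge to the parent, where `rfun C₁ C₂` is the resistance between classes `C₁` and `C₂`. -/
noncomputable def treeRes {X : Type*} (RC : Set (Set X)) (rfun : Set X → Set X → ℝ)
    (root : Set X) (par : Set X → Set X) : ℝ :=
  ∑ᶠ Cl ∈ {Cl | Cl ∈ RC ∧ Cl ≠ root}, rfun Cl (par Cl)

/-- Stochastic potential of the recurrence class `root`: minimum total resistance over
trees rooted at `root`. -/
noncomputable def stochPot {X : Type*} (RC : Set (Set X)) (rfun : Set X → Set X → ℝ)
    (root : Set X) : ℝ :=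
  sInf {s | ∃ par, IsLTree RC root par ∧ s = treeRes RC rfun root par}

/- Trees over recurrence classes indexed by `Fin L`. -/

/-- An `ℓ`-tree on vertex set `Fin L` rooted at `root`, encoded by a parent map. -/
def IsLTreeFin {L : ℕ} (root : Fin L) (par : Fin L → Fin L) : Prop :=
  par root = root ∧ ∀ v, ∃ k : ℕ, par^[k] v = root

/-- Total resistance of a tree on `Fin L`. -/
noncomputable def treeResFin {L : ℕ} (r : Fin L → Fin L → ℝ) (root : Fin L)
    (par : Fin L → Fin L) : ℝ :=
  ∑ v ∈ Finset.univ.filter (fun v => v ≠ root), r v (par v)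

/-- Stochastic potential of the recurrence class indexed by `root`. -/
noncomputable def stochPotFin {L : ℕ} (r : Fin L → Fin L → ℝ) (root : Fin L) : ℝ :=
  sInf {s | ∃ par, IsLTreeFin root par ∧ s = treeResFin r root par}

end Paper

/-!
As `ε → 0⁺`, every factor of a transition probability `P ε x y` either vanishes or is asymptotic
to a positive multiple of a power of `ε`, and the only factor of positive order that cannot be
avoided is the acceptance probability `ε ^ (1 - u)` of an agent whose state changes to a content
one with utility `u`. So a transition costs at least the sum of these `1 - u`, with equality when
no content agent experiments and every content agent keeps its state. Along a path from an
all-discontent state to `z⁰` every agent must eventually accept its state in `z⁰`, which gives the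
lower bound `Σ (1 - ū_i(z⁰))`.

For the matching path, start from the all-discontent state that has just played `ā(z⁰)` and let
the agents accept one at a time, agent `i` under a disturbance `w_i` with
`ū_i(z⁰) = U_i(ā(z⁰), w_i)`. Since `z⁰ ∈ B_i`, an agent that is already content receives a payoff
within `ρ` of its baseline whatever the disturbance, so it keeps its state at no cost.
-/

namespace Paper

/-- `TransRes U Prw c x y r` unfolds to `∃ L > 0, HasScaledLimit (fun ε => P U Prw c ε x y) r L`. -/
def HasScaledLimit (f : ℝ → ℝ) (e L : ℝ) : Prop :=
  Tendsto (fun ε => f ε / ε ^ e) (𝓝[>] 0) (𝓝 L)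

theorem tendsto_rpow_nhdsGT_zero {p : ℝ} (hp : 0 < p) :
    Tendsto (fun ε : ℝ => ε ^ p) (𝓝[>] 0) (𝓝 0) := by
  have h := (Real.continuousAt_rpow_const 0 p (Or.inr hp.le)).tendsto
  rw [Real.zero_rpow hp.ne'] at h
  exact h.mono_left nhdsWithin_le_nhds

theorem hasScaledLimit_const (k : ℝ) : HasScaledLimit (fun _ => k) 0 k := by
  simp [HasScaledLimit]

theorem hasScaledLimit_zero (e : ℝ) : HasScaledLimit (fun _ => 0) e 0 := by
  simp [HasScaledLimit]

theorem hasScaledLimit_rpow (p : ℝ) : HasScaledLimit (fun ε => ε ^ p) p 1 :=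
  tendsto_const_nhds.congr' <| eventually_nhdsWithin_of_forall fun ε (hε : 0 < ε) =>
    (div_self (Real.rpow_pos_of_pos hε p).ne').symm

theorem hasScaledLimit_one_sub_rpow {p : ℝ} (hp : 0 < p) :
    HasScaledLimit (fun ε => 1 - ε ^ p) 0 1 := by
  simpa [HasScaledLimit] using tendsto_const_nhds.sub (tendsto_rpow_nhdsGT_zero hp)

namespace HasScaledLimit

variable {f g : ℝ → ℝ} {e e' L L' : ℝ}

theorem unique (h : HasScaledLimit f e L) (h' : HasScaledLimit f e L') : L = L' :=
  tendsto_nhds_unique h h'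

theorem congr (h : HasScaledLimit f e L) (hfg : ∀ ε, 0 < ε → f ε = g ε) :
    HasScaledLimit g e L :=
  Tendsto.congr' (eventually_nhdsWithin_of_forall fun ε hε => by rw [hfg ε hε]) h

theorem mul (hf : HasScaledLimit f e L) (hg : HasScaledLimit g e' L') :
    HasScaledLimit (fun ε => f ε * g ε) (e + e') (L * L') := by
  refine Tendsto.congr' (eventually_nhdsWithin_of_forall fun ε (hε : 0 < ε) => ?_)
    (Tendsto.mul hf hg)
  simp only [Real.rpow_add hε]
  field_simp

theorem prod {ι : Type*} {f : ι → ℝ → ℝ} {e L : ι → ℝ} (s : Finset ι)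
    (h : ∀ i ∈ s, HasScaledLimit (f i) (e i) (L i)) :
    HasScaledLimit (fun ε => ∏ i ∈ s, f i ε) (∑ i ∈ s, e i) (∏ i ∈ s, L i) := by
  induction s using Finset.induction_on with
  | empty => simpa using hasScaledLimit_const 1
  | insert a s ha ih =>
    simp only [Finset.prod_insert ha, Finset.sum_insert ha]
    exact (h a (s.mem_insert_self a)).mul (ih fun i hi => h i (Finset.mem_insert_of_mem hi))

theorem sum {ι : Type*} {f : ι → ℝ → ℝ} {L : ι → ℝ} (s : Finset ι)
    (h : ∀ i ∈ s, HasScaledLimit (f i) e (L i)) :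
    HasScaledLimit (fun ε => ∑ i ∈ s, f i ε) e (∑ i ∈ s, L i) := by
  simpa only [HasScaledLimit, Finset.sum_div] using tendsto_finsetSum s h

theorem of_lt (h : HasScaledLimit f e L) (he : e' < e) : HasScaledLimit f e' 0 := by
  refine Tendsto.congr' (eventually_nhdsWithin_of_forall fun ε (hε : 0 < ε) => ?_)
    (by simpa using Tendsto.mul h (tendsto_rpow_nhdsGT_zero (sub_pos.mpr he)))
  simp only [Real.rpow_sub hε]
  field_simp

theorem exists_nonneg_of_le (h : HasScaledLimit f e L) (hL : 0 ≤ L) (he : e' ≤ e) :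
    ∃ L' ≥ 0, HasScaledLimit f e' L' := by
  rcases he.eq_or_lt with rfl | he
  · exact ⟨L, hL, h⟩
  · exact ⟨0, le_rfl, h.of_lt he⟩

end HasScaledLimit

section Agent

variable {n : ℕ} {A : Fin n → Type*} {i : Fin n}

noncomputable def acceptCost {α : Type*} (zi zi' : AgentState α) : ℝ :=
  if zi ≠ zi' ∧ zi'.mood = Mood.content then 1 - zi'.util else 0

@[simp]
theorem acceptCost_self {α : Type*} (zi : AgentState α) : acceptCost zi zi = 0 := by
  simp [acceptCost]

theorem acceptCost_nonneg {α : Type*} {zi zi' : AgentState α}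
    (h : zi ≠ zi' → zi'.util ≤ 1) : 0 ≤ acceptCost zi zi' := by
  unfold acceptCost
  split_ifs with hc
  · linarith [h hc.1]
  · exact le_rfl

theorem acceptCost_le_add {α : Type*} {x m z : AgentState α} (hxm : x ≠ m → m.util ≤ 1)
    (hmz : m ≠ z → z.util ≤ 1) : acceptCost x z ≤ acceptCost x m + acceptCost m z := by
  by_cases hm : m = z
  · simp [hm]
  · have : acceptCost x z ≤ acceptCost m z := by
      unfold acceptCost
      split_ifs with h₁ h₂ h₂ <;> simp_all
    linarith [acceptCost_nonneg hxm]

theorem exists_hasScaledLimit_actProb [∀ i, Fintype (A i)] {c : ℝ} (hc : 0 < c)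
    (zi : AgentState (A i)) (ai : A i) :
    ∃ L ≥ 0, HasScaledLimit (fun ε => actProb c ε zi ai) 0 L := by
  have hcard : (1 : ℝ) ≤ Fintype.card (A i) := by
    exact_mod_cast Fintype.card_pos_iff.mpr ⟨ai⟩
  cases hm : zi.mood with
  | discontent =>
    exact ⟨_, by positivity,
      (hasScaledLimit_const (1 / (Fintype.card (A i) : ℝ))).congr fun _ _ => by
        simp [actProb, hm]⟩
  | content =>
    by_cases ha : ai = zi.act
    · exact ⟨1, zero_le_one,
        (hasScaledLimit_one_sub_rpow hc).congr fun ε _ => by simp [actProb, hm, ha]⟩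
    · refine (((hasScaledLimit_rpow c).mul (hasScaledLimit_const _)).congr fun ε _ => ?_)
        |>.exists_nonneg_of_le (L := 1 * ((Fintype.card (A i) : ℝ) - 1)⁻¹) ?_ (by linarith)
      · simp [actProb, hm, ha, div_eq_mul_inv]
      · have : (0 : ℝ) ≤ (Fintype.card (A i) : ℝ) - 1 := by linarith
        positivity

theorem exists_pos_hasScaledLimit_actProb [∀ i, Fintype (A i)] {c : ℝ} (hc : 0 < c)
    {zi : AgentState (A i)} {ai : A i} (h : zi.mood = Mood.content → ai = zi.act) :
    ∃ L > 0, HasScaledLimit (fun ε => actProb c ε zi ai) 0 L := by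
  cases hm : zi.mood with
  | discontent =>
    have : 0 < Fintype.card (A i) := Fintype.card_pos_iff.mpr ⟨ai⟩
    exact ⟨_, by positivity,
      (hasScaledLimit_const (1 / (Fintype.card (A i) : ℝ))).congr fun _ _ => by
        simp [actProb, hm]⟩
  | content =>
    exact ⟨1, one_pos,
      (hasScaledLimit_one_sub_rpow hc).congr fun ε _ => by simp [actProb, hm, h hm]⟩

theorem exists_hasScaledLimit_updProb (ρ : ℝ) (zi zi' : AgentState (A i)) (ai : A i) {u : ℝ}
    (hu : u < 1) :
    ∃ L ≥ 0, HasScaledLimit (fun ε => updProb ρ ε zi zi' ai u) (acceptCost zi zi') L := by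
  by_cases hk : zi.mood = Mood.content ∧ ai = zi.act ∧ |u - zi.util| ≤ ρ
  · by_cases he : zi' = zi
    · subst he
      refine ⟨1, zero_le_one, ?_⟩
      simpa using (hasScaledLimit_const 1).congr fun ε _ => by simp [updProb, hk]
    · exact ⟨0, le_rfl, (hasScaledLimit_zero _).congr fun ε _ => by simp [updProb, hk, he]⟩
  by_cases h₁ : zi' = ⟨ai, u, Mood.content⟩
  · refine ((hasScaledLimit_rpow (1 - u)).congr fun ε _ => by simp [updProb, hk, h₁])
      |>.exists_nonneg_of_le zero_le_one ?_
    unfold acceptCost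
    split_ifs
    · simp [h₁]
    · linarith
  by_cases h₂ : zi' = ⟨ai, u, Mood.discontent⟩
  · refine ⟨1, zero_le_one, ?_⟩
    have : acceptCost zi zi' = 0 := by simp [acceptCost, h₂]
    rw [this]
    exact (hasScaledLimit_one_sub_rpow (p := 1 - u) (by linarith)).congr fun ε _ => by
      simp [updProb, hk, h₂]
  · exact ⟨0, le_rfl,
      (hasScaledLimit_zero _).congr fun ε _ => by simp [updProb, hk, h₁, h₂]⟩

theorem exists_pos_hasScaledLimit_updProb {ρ : ℝ} {zi zi' : AgentState (A i)} {ai : A i}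
    {u : ℝ} (hu : u < 1)
    (hcontent : zi.mood = Mood.content → ai = zi.act ∧ |u - zi.util| ≤ ρ ∧ zi' = zi)
    (hdisc : zi.mood = Mood.discontent → zi'.act = ai ∧ zi'.util = u) :
    ∃ L > 0, HasScaledLimit (fun ε => updProb ρ ε zi zi' ai u) (acceptCost zi zi') L := by
  cases hm : zi.mood with
  | content =>
    obtain ⟨ha, hρ, rfl⟩ := hcontent hm
    refine ⟨1, one_pos, ?_⟩
    simpa using (hasScaledLimit_const 1).congr fun ε _ => by simp [updProb, hm, ha, hρ]
  | discontent =>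
    obtain ⟨act, util, mood⟩ := zi'
    obtain ⟨rfl, rfl⟩ := hdisc hm
    cases mood with
    | content =>
      have hne : zi ≠ ⟨act, util, Mood.content⟩ := fun h => by simp [h] at hm
      have : acceptCost zi ⟨act, util, Mood.content⟩ = 1 - util := by simp [acceptCost, hne]
      rw [this]
      exact ⟨1, one_pos, (hasScaledLimit_rpow _).congr fun ε _ => by simp [updProb, hm]⟩
    | discontent =>
      have : acceptCost zi ⟨act, util, Mood.discontent⟩ = 0 := by simp [acceptCost]
      rw [this]
      refine ⟨1, one_pos, ?_⟩
      exact (hasScaledLimit_one_sub_rpow (p := 1 - util) (by linarith)).congr fun ε _ => by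
        simp [updProb, hm]

theorem util_eq_of_updProb_ne_zero {ρ ε : ℝ} {zi zi' : AgentState (A i)} {ai : A i} {u : ℝ}
    (h : updProb ρ ε zi zi' ai u ≠ 0) (hne : zi ≠ zi') : zi'.util = u := by
  unfold updProb at h
  split_ifs at h with hk hz h₁ h₂ <;> simp_all

end Agent

theorem PathRes.snoc {X : Type*} {R : X → X → ℝ → Prop} {x y z : X} {r s : ℝ}
    (h : PathRes R x y r) (hyz : R y z s) : PathRes R x z (r + s) := by
  induction h with
  | single hxy => exact .cons hxy (.single hyz)
  | cons hxy _ ih => simpa only [add_assoc] using PathRes.cons hxy (ih hyz)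

section Joint

variable {n : ℕ} {A : Fin n → Type*} {W : Type*}

noncomputable def acceptanceCost (x y : JState A) : ℝ := ∑ i, acceptCost (x i) (y i)

variable [∀ i, Fintype (A i)]

noncomputable def transTerm (U : Fin n → (∀ j, A j) → W → ℝ) (Prw : W → ℝ) (c : ℝ)
    (x y : JState A) (a : ∀ j, A j) (w : W) (ε : ℝ) : ℝ :=
  (∏ i, actProb c ε (x i) (a i)) * Prw w * ∏ i, updProb (rho U) ε (x i) (y i) (a i) (U i a w)

def IsNonExperimentalStep (U : Fin n → (∀ j, A j) → W → ℝ) (x y : JState A)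
    (a : ∀ j, A j) (w : W) : Prop :=
  ∀ i, ((x i).mood = Mood.content →
      a i = (x i).act ∧ |U i a w - (x i).util| ≤ rho U ∧ y i = x i) ∧
    ((x i).mood = Mood.discontent → (y i).act = a i ∧ (y i).util = U i a w)

variable {U : Fin n → (∀ j, A j) → W → ℝ} {Prw : W → ℝ} {c : ℝ} {x y z : JState A}

theorem hasScaledLimit_transTerm {a : ∀ j, A j} {w : W} {La Lu : Fin n → ℝ}
    (hact : ∀ i, HasScaledLimit (fun ε => actProb c ε (x i) (a i)) 0 (La i))
    (hupd : ∀ i, HasScaledLimit (fun ε => updProb (rho U) ε (x i) (y i) (a i) (U i a w))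
      (acceptCost (x i) (y i)) (Lu i)) :
    HasScaledLimit (transTerm U Prw c x y a w) (acceptanceCost x y)
      ((∏ i, La i) * Prw w * ∏ i, Lu i) := by
  rw [show acceptanceCost x y = ∑ _i : Fin n, 0 + 0 + acceptanceCost x y by simp]
  exact ((HasScaledLimit.prod Finset.univ fun i _ => hact i).mul
    (hasScaledLimit_const (Prw w))).mul (HasScaledLimit.prod Finset.univ fun i _ => hupd i)

theorem exists_hasScaledLimit_transTerm (hc : 0 < c) (hU : ∀ i a w, U i a w < 1) {w : W}
    (hPrw : 0 ≤ Prw w) (a : ∀ j, A j) :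
    ∃ L ≥ 0, HasScaledLimit (transTerm U Prw c x y a w) (acceptanceCost x y) L := by
  choose La hLa hact using fun i => exists_hasScaledLimit_actProb hc (x i) (a i)
  choose Lu hLu hupd using fun i =>
    exists_hasScaledLimit_updProb (rho U) (x i) (y i) (a i) (hU i a w)
  have := Finset.prod_nonneg fun i (_ : i ∈ Finset.univ) => hLa i
  have := Finset.prod_nonneg fun i (_ : i ∈ Finset.univ) => hLu i
  exact ⟨_, by positivity, hasScaledLimit_transTerm hact hupd⟩

theorem exists_pos_hasScaledLimit_transTerm (hc : 0 < c) (hU : ∀ i a w, U i a w < 1)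
    {a : ∀ j, A j} {w : W} (hPrw : 0 < Prw w) (h : IsNonExperimentalStep U x y a w) :
    ∃ L > 0, HasScaledLimit (transTerm U Prw c x y a w) (acceptanceCost x y) L := by
  choose La hLa hact using fun i =>
    exists_pos_hasScaledLimit_actProb (ai := a i) hc fun hm => (h i).1 hm |>.1
  choose Lu hLu hupd using fun i =>
    exists_pos_hasScaledLimit_updProb (hU i a w) (h i).1 (h i).2
  have := Finset.prod_pos fun i (_ : i ∈ Finset.univ) => hLa i
  have := Finset.prod_pos fun i (_ : i ∈ Finset.univ) => hLu i
  exact ⟨_, by positivity, hasScaledLimit_transTerm hact hupd⟩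

variable [Fintype W]

theorem hasScaledLimit_P {e : ℝ} {L : (∀ j, A j) → W → ℝ}
    (h : ∀ a w, HasScaledLimit (transTerm U Prw c x y a w) e (L a w)) :
    HasScaledLimit (fun ε => P U Prw c ε x y) e (∑ a, ∑ w, L a w) :=
  HasScaledLimit.sum _ fun a _ => HasScaledLimit.sum _ fun w _ => h a w

theorem transRes_of_isNonExperimentalStep (hc : 0 < c) (hU : ∀ i a w, U i a w < 1)
    (hPrw : ∀ w, 0 ≤ Prw w) {a : ∀ j, A j} {w : W} (hw : 0 < Prw w)
    (h : IsNonExperimentalStep U x y a w) :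
    TransRes U Prw c x y (acceptanceCost x y) := by
  choose L hL hlim using fun a w =>
    exists_hasScaledLimit_transTerm (x := x) (y := y) hc hU (hPrw w) a
  obtain ⟨L₀, hL₀, hlim₀⟩ := exists_pos_hasScaledLimit_transTerm hc hU hw h
  have hLaw : L a w = L₀ := (hlim a w).unique hlim₀
  refine ⟨_, ?_, hasScaledLimit_P hlim⟩
  exact Finset.sum_pos' (fun a _ => Finset.sum_nonneg fun w _ => hL a w) ⟨a, Finset.mem_univ a,
    Finset.sum_pos' (fun w _ => hL a w) ⟨w, Finset.mem_univ w, hLaw ▸ hL₀⟩⟩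

theorem acceptanceCost_le_of_transRes (hc : 0 < c) (hU : ∀ i a w, U i a w < 1)
    (hPrw : ∀ w, 0 ≤ Prw w) {r : ℝ} (h : TransRes U Prw c x y r) :
    acceptanceCost x y ≤ r := by
  obtain ⟨L, hL, hlim⟩ := h
  choose L' _ hlim' using fun a w =>
    exists_hasScaledLimit_transTerm (x := x) (y := y) hc hU (hPrw w) a
  by_contra! hr
  exact hL.ne (((hasScaledLimit_P hlim').of_lt hr).unique hlim)

theorem stepPos_of_transRes {r : ℝ} (h : TransRes U Prw c x y r) : stepPos U Prw c x y := by
  obtain ⟨L, hL, hlim⟩ := h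
  obtain ⟨ε, hpos, hε⟩ :=
    ((hlim.eventually (eventually_gt_nhds hL)).and (Ioo_mem_nhdsGT one_pos)).exists
  exact ⟨ε, hε, (div_pos_iff_of_pos_right (Real.rpow_pos_of_pos hε.1 r)).mp hpos⟩

theorem util_lt_one_of_stepPos (hU : ∀ i a w, U i a w < 1) (h : stepPos U Prw c x y)
    {i : Fin n} (hi : x i ≠ y i) : (y i).util < 1 := by
  obtain ⟨ε, -, hP⟩ := h
  obtain ⟨a, -, ha⟩ := Finset.exists_ne_zero_of_sum_ne_zero hP.ne'
  obtain ⟨w, -, hw⟩ := Finset.exists_ne_zero_of_sum_ne_zero ha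
  have := Finset.prod_ne_zero_iff.mp (right_ne_zero_of_mul hw) i (Finset.mem_univ i)
  exact util_eq_of_updProb_ne_zero this hi ▸ hU i a w

theorem util_lt_one_of_pathRes (hU : ∀ i a w, U i a w < 1) {r : ℝ}
    (h : PathRes (TransRes U Prw c) x z r) {i : Fin n} (hi : x i ≠ z i) : (z i).util < 1 := by
  induction h with
  | single h => exact util_lt_one_of_stepPos hU (stepPos_of_transRes h) hi
  | @cons x m z _ _ hxm _ ih =>
    by_cases hmz : m i = z i
    · exact hmz ▸ util_lt_one_of_stepPos hU (stepPos_of_transRes hxm) (hmz ▸ hi)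
    · exact ih hmz

theorem acceptanceCost_le_of_pathRes (hc : 0 < c) (hU : ∀ i a w, U i a w < 1)
    (hPrw : ∀ w, 0 ≤ Prw w) {r : ℝ} (h : PathRes (TransRes U Prw c) x z r) :
    acceptanceCost x z ≤ r := by
  induction h with
  | single h => exact acceptanceCost_le_of_transRes hc hU hPrw h
  | @cons x m z r s hxm hmz ih =>
    calc acceptanceCost x z ≤ acceptanceCost x m + acceptanceCost m z := by
          rw [acceptanceCost, acceptanceCost, acceptanceCost, ← Finset.sum_add_distrib]
          exact Finset.sum_le_sum fun i _ => acceptCost_le_add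
            (fun hi => (util_lt_one_of_stepPos hU (stepPos_of_transRes hxm) hi).le)
            (fun hi => (util_lt_one_of_pathRes hU hmz hi).le)
      _ ≤ r + s := add_le_add (acceptanceCost_le_of_transRes hc hU hPrw hxm) ih

end Joint

section Settle

variable {n : ℕ} {A : Fin n → Type*} {W : Type*}

def settledOn (U : Fin n → (∀ j, A j) → W → ℝ) (z0 : JState A) (s : Finset (Fin n))
    (w : W) : JState A :=
  fun i => if i ∈ s then z0 i else ⟨(z0 i).act, U i (prof z0) w, Mood.discontent⟩

variable {U : Fin n → (∀ j, A j) → W → ℝ} {z0 : JState A}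

theorem settledOn_univ (w : W) : settledOn U z0 Finset.univ w = z0 := by
  funext i
  simp [settledOn]

theorem allDiscontent_settledOn_empty (w : W) : allDiscontent (settledOn U z0 ∅ w) := fun i => by
  simp [settledOn]

theorem isNonExperimentalStep_settledOn (hz0 : allContent z0)
    (hρ : ∀ i w, |(z0 i).util - U i (prof z0) w| ≤ rho U) {s s' : Finset (Fin n)}
    (hss : s ⊆ s') {w w' : W} (hw' : ∀ i ∈ s' \ s, (z0 i).util = U i (prof z0) w') :
    IsNonExperimentalStep U (settledOn U z0 s w) (settledOn U z0 s' w') (prof z0) w' := by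
  intro i
  by_cases hi : i ∈ s
  · refine ⟨fun _ => ?_, fun hm => by simp [settledOn, hi, hz0 i] at hm⟩
    simp [settledOn, hi, hss hi, prof, abs_sub_comm, hρ i w']
  · refine ⟨fun hm => by simp [settledOn, hi] at hm, fun _ => ?_⟩
    by_cases hi' : i ∈ s'
    · simp [settledOn, hi', prof, hw' i (Finset.mem_sdiff.mpr ⟨hi', hi⟩)]
    · simp [settledOn, hi', prof]

theorem acceptanceCost_settledOn (hz0 : allContent z0) {s s' : Finset (Fin n)} (hss : s ⊆ s')
    (w w' : W) :
    acceptanceCost (settledOn U z0 s w) (settledOn U z0 s' w') =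
      ∑ i ∈ s' \ s, (1 - (z0 i).util) := by
  rw [acceptanceCost, ← Fintype.sum_ite_mem (s' \ s)]
  refine Finset.sum_congr rfl fun i _ => ?_
  by_cases hi : i ∈ s
  · simp [settledOn, hi, hss hi]
  by_cases hi' : i ∈ s'
  · have hne : (⟨(z0 i).act, U i (prof z0) w, Mood.discontent⟩ : AgentState (A i)) ≠ z0 i :=
      fun h => by simpa [hz0 i] using congrArg AgentState.mood h
    simp [acceptCost, settledOn, hi, hi', hz0 i, hne]
  · simp [acceptCost, settledOn, hi, hi']

theorem acceptanceCost_of_allDiscontent {d z : JState A} (hd : allDiscontent d)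
    (hz : allContent z) : acceptanceCost d z = ∑ i, (1 - (z i).util) := by
  refine Finset.sum_congr rfl fun i _ => ?_
  have hne : d i ≠ z i := fun h => by simpa [h, hz i] using hd i
  simp [acceptCost, hne, hz i]

variable [∀ i, Fintype (A i)] [Fintype W] {Prw : W → ℝ} {c : ℝ}

theorem transRes_settledOn (hc : 0 < c) (hU : ∀ i a w, U i a w < 1) (hPrw : ∀ w, 0 < Prw w)
    (hz0 : allContent z0) (hρ : ∀ i w, |(z0 i).util - U i (prof z0) w| ≤ rho U)
    {s s' : Finset (Fin n)} (hss : s ⊆ s') {w w' : W}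
    (hw' : ∀ i ∈ s' \ s, (z0 i).util = U i (prof z0) w') :
    TransRes U Prw c (settledOn U z0 s w) (settledOn U z0 s' w')
      (∑ i ∈ s' \ s, (1 - (z0 i).util)) :=
  acceptanceCost_settledOn hz0 hss w w' ▸ transRes_of_isNonExperimentalStep hc hU
    (fun w => (hPrw w).le) (hPrw w') (isNonExperimentalStep_settledOn hz0 hρ hss hw')

theorem exists_pathRes_settledOn (hc : 0 < c) (hU : ∀ i a w, U i a w < 1)
    (hPrw : ∀ w, 0 < Prw w) (hz0 : allContent z0)
    (hρ : ∀ i w, |(z0 i).util - U i (prof z0) w| ≤ rho U) {ws : Fin n → W}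
    (hws : ∀ i, (z0 i).util = U i (prof z0) (ws i)) (w₀ : W) (s : Finset (Fin n)) :
    ∃ w, PathRes (TransRes U Prw c) (settledOn U z0 ∅ w₀) (settledOn U z0 s w)
      (∑ i ∈ s, (1 - (z0 i).util)) := by
  induction s using Finset.induction_on with
  | empty =>
    refine ⟨w₀, ?_⟩
    simpa using PathRes.single (transRes_settledOn hc hU hPrw hz0 hρ (Finset.Subset.refl ∅)
      (w := w₀) (w' := w₀) (by simp))
  | insert t s ht ih =>
    obtain ⟨w, hpath⟩ := ih
    have hedge := transRes_settledOn (c := c) hc hU hPrw hz0 hρ (s.subset_insert t) (w := w)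
      (w' := ws t) fun i hi => by simp_all
    rw [Finset.insert_sdiff_cancel ht, Finset.sum_singleton] at hedge
    rw [Finset.sum_insert ht, add_comm]
    exact ⟨ws t, hpath.snoc hedge⟩

theorem settledOn_empty_mem_Dset (hc : 0 < c) (hU : ∀ i a w, U i a w < 1)
    (hPrw : ∀ w, 0 < Prw w) (hz0 : allContent z0)
    (hρ : ∀ i w, |(z0 i).util - U i (prof z0) w| ≤ rho U) (w₀ : W) :
    settledOn U z0 ∅ w₀ ∈ Dset U Prw c := by
  have hloop := transRes_settledOn (c := c) hc hU hPrw hz0 hρ (Finset.Subset.refl ∅)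
    (w := w₀) (w' := w₀) (by simp)
  have hvalid : ValidState U (settledOn U z0 ∅ w₀) := fun i => ⟨prof z0, w₀, by simp [settledOn]⟩
  exact ⟨⟨_, hvalid, allDiscontent_settledOn_empty w₀, .single (stepPos_of_transRes hloop)⟩,
    allDiscontent_settledOn_empty w₀⟩

end Settle

theorem resistance_D_to_C0_general {n : ℕ} {A : Fin n → Type*} {W : Type*}
    [∀ i, Fintype (A i)] [Fintype W] [Nonempty W]
    (U : ∀ i : Fin n, (∀ j, A j) → W → ℝ) (Prw : W → ℝ) (c : ℝ)
    (hU : ∀ (i : Fin n) (a : ∀ j, A j) (w : W), U i a w ∈ Set.Ico (0:ℝ) 1)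
    (hPrw : ∀ w : W, 0 < Prw w)
    (hc : (n : ℝ) < c) :
    ∀ z0 ∈ Cm U Prw c 0,
      ClassResIs (TransRes U Prw c) (Dset U Prw c) {z0}
        (∑ i, (1 - (z0 i).util)) := by
  rintro z0 ⟨-, hz0, hB⟩
  have hc0 : 0 < c := (Nat.cast_nonneg n).trans_lt hc
  have hU1 : ∀ i a w, U i a w < 1 := fun i a w => (hU i a w).2
  have hρ := fun i => (hB i).2.2
  choose ws hws using fun i => (hB i).2.1
  obtain ⟨w₀⟩ := ‹Nonempty W›
  obtain ⟨w, hpath⟩ := exists_pathRes_settledOn hc0 hU1 hPrw hz0 hρ hws w₀ Finset.univ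
  rw [settledOn_univ] at hpath
  refine ⟨⟨_, settledOn_empty_mem_Dset hc0 hU1 hPrw hz0 hρ w₀, z0, rfl, hpath⟩, ?_⟩
  rintro d ⟨-, hd⟩ _ rfl r hr
  exact acceptanceCost_of_allDiscontent hd hz0 ▸
    acceptanceCost_le_of_pathRes hc0 hU1 (fun w => (hPrw w).le) hr

/-- Table I, row 1: the resistance from the recurrence class `D` to a
singleton recurrence class `{z⁰}` with `z⁰ ∈ C^0` is `Σ_{i∈N} (1 − ū_i(z⁰))`. -/
theorem resistance_D_to_C0 {n : ℕ} {A : Fin n → Type*} {W : Type*}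
    [∀ i, Fintype (A i)] [∀ i, Nonempty (A i)] [Fintype W] [Nonempty W]
    (U : ∀ i : Fin n, (∀ j, A j) → W → ℝ) (Prw : W → ℝ) (c : ℝ)
    (hn : 0 < n)
    (hU : ∀ (i : Fin n) (a : ∀ j, A j) (w : W), U i a w ∈ Set.Ico (0:ℝ) 1)
    (hPrw : ∀ w : W, 0 < Prw w) (hPrw1 : (∑ w : W, Prw w) = 1)
    (hc : (n : ℝ) < c)
    (hInter : Interdependent U) :
    ∀ z0 ∈ Cm U Prw c 0,
      ClassResIs (TransRes U Prw c) (Dset U Prw c) {z0}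
        (∑ i, (1 - (z0 i).util)) :=
  resistance_D_to_C0_general U Prw c hU hPrw hc

end Paper
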